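/- Assume the forward spiral condition V_{N+k} = M·T(V_{k−1}) for all k ≥ 1, the normalization det ρ_j = 1 for j = 0, 1, …, N, and that a_j ≠ 0 for all j. If det(V_{N+1}, M·V_1, V_N) = 0 and det(M·V_0, V_N, V_{N−1}) = 0, then c_{−1} = a_{N−1}/a_0. -/
import Mathlib


open Matrix

/-- The 3×3 matrix with columns `u, v, w`. -/
def colMat (u v w : Fin 3 → ℝ) : Matrix (Fin 3) (Fin 3) ℝ :=
  Matrix.of fun i j => ![u, v, w] j i

/-- `det(u,v,w)`: determinant of the 3×3 matrix with columns `u, v, w`. -/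
def det3 (u v w : Fin 3 → ℝ) : ℝ := (colMat u v w).det


lemma det3_eq (u v w : Fin 3 → ℝ) :
    det3 u v w = u 0 * (v 1 * w 2 - v 2 * w 1) - v 0 * (u 1 * w 2 - u 2 * w 1)
      + w 0 * (u 1 * v 2 - u 2 * v 1) := by
  simp [det3, colMat, Matrix.det_fin_three]
  ring

lemma cross4 (u v w x : Fin 3 → ℝ) :
    crossProduct (crossProduct u v) (crossProduct w x) = det3 u v x • w - det3 u v w • x := by
  funext i
  fin_cases i <;>
    simp [cross_apply, det3_eq, Pi.sub_apply, Pi.smul_apply, smul_eq_mul] <;> ring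

lemma mulVec_comb (M : Matrix (Fin 3) (Fin 3) ℝ) (p q : ℝ) (x y : Fin 3 → ℝ) :
    M.mulVec (p • x + q • y) = p • M.mulVec x + q • M.mulVec y := by
  funext i
  simp [Matrix.mulVec, dotProduct, Fin.sum_univ_three, Pi.add_apply, Pi.smul_apply, smul_eq_mul]
  ring

lemma det3_lin2 (p q : ℝ) (u v y z : Fin 3 → ℝ) :
    det3 (p • u + q • v) y z = p * det3 u y z + q * det3 v y z := by
  simp only [det3_eq, Pi.add_apply, Pi.smul_apply, smul_eq_mul]; ring

lemma det3_lin3 (p q r : ℝ) (u v w y z : Fin 3 → ℝ) :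
    det3 (p • u + q • v + r • w) y z
      = p * det3 u y z + q * det3 v y z + r * det3 w y z := by
  simp only [det3_eq, Pi.add_apply, Pi.smul_apply, smul_eq_mul]; ring

/-- under the forward spiral condition, the normalization
`det ρ_j = 1` for `j = 0, …, N`, and `a_j ≠ 0` for all `j`, the seed conditions
`det(V_{N+1}, M·V₁, V_N) = 0` and `det(M·V₀, V_N, V_{N−1}) = 0` imply
`c_{−1} = a_{N−1}/a₀`. -/
theorem cm1_formula (N : ℕ) (hN : 5 ≤ N)
    (V : ℤ → Fin 3 → ℝ) (a b c : ℤ → ℝ)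
    (hrec : ∀ j : ℤ, V (j + 3) = a j • V (j + 2) + b j • V (j + 1) + c j • V j)
    (ρ : ℤ → Matrix (Fin 3) (Fin 3) ℝ)
    (hρ : ∀ j : ℤ, ρ j = colMat (V j) (V (j + 1)) (V (j + 2)))
    (hρinv : ∀ j : ℤ, IsUnit (ρ j))
    (M : Matrix (Fin 3) (Fin 3) ℝ) (hM : M.det = 1)
    (T : ℤ → Fin 3 → ℝ)
    (hT : ∀ j : ℤ, T j =
      crossProduct (crossProduct (V (j - 1)) (V (j + 1))) (crossProduct (V j) (V (j + 2))))
    (hfwd : ∀ k : ℤ, 1 ≤ k → V ((N : ℤ) + k) = M.mulVec (T (k - 1)))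
    (hnorm : ∀ j : ℤ, 0 ≤ j → j ≤ (N : ℤ) → (ρ j).det = 1)
    (ha : ∀ j : ℤ, a j ≠ 0)
    (hseed1 : det3 (V ((N : ℤ) + 1)) (M.mulVec (V 1)) (V (N : ℤ)) = 0)
    (hseed2 : det3 (M.mulVec (V 0)) (V (N : ℤ)) (V ((N : ℤ) - 1)) = 0) :
    c (-1) = a ((N : ℤ) - 1) / a 0 := by
  have hN' : (5 : ℤ) ≤ (N : ℤ) := by exact_mod_cast hN
  have hnorm' : ∀ j : ℤ, 0 ≤ j → j ≤ (N : ℤ) → det3 (V j) (V (j + 1)) (V (j + 2)) = 1 := by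
    intro j h1 h2
    have := hnorm j h1 h2
    rw [hρ] at this
    exact this
  have hkey : ∀ j : ℤ,
      det3 (V (j + 1)) (V (j + 2)) (V (j + 3)) = c j * det3 (V j) (V (j + 1)) (V (j + 2)) := by
    intro j
    rw [hrec j]
    simp only [det3_eq, Pi.add_apply, Pi.smul_apply, smul_eq_mul]
    ring
  have h0 : det3 (V 0) (V 1) (V 2) = 1 := by
    have := hnorm' 0 le_rfl (by linarith)
    norm_num at this
    exact this
  have h1 : det3 (V 1) (V 2) (V 3) = 1 := by
    have := hnorm' 1 (by norm_num) (by linarith)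
    norm_num at this
    exact this
  have hc0 : c 0 = 1 := by
    have := hkey 0
    norm_num at this
    rw [h0, h1] at this
    linarith
  set d := det3 (V (-1)) (V 0) (V 1) with hd
  have hcd : c (-1) * d = 1 := by
    have := hkey (-1)
    norm_num at this
    rw [h0, ← hd] at this
    linarith
  have hrecm1 : V 2 = a (-1) • V 1 + b (-1) • V 0 + c (-1) • V (-1) := by
    have := hrec (-1); norm_num at this; exact this
  have hrec0 : V 3 = a 0 • V 2 + b 0 • V 1 + c 0 • V 0 := by
    have := hrec 0; norm_num at this; exact this
  have hrecN : V ((N : ℤ) + 2) = a ((N : ℤ) - 1) • V ((N : ℤ) + 1)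
      + b ((N : ℤ) - 1) • V (N : ℤ) + c ((N : ℤ) - 1) • V ((N : ℤ) - 1) := by
    have := hrec ((N : ℤ) - 1)
    simp only [show ((N : ℤ) - 1 + 3) = (N : ℤ) + 2 by ring,
      show ((N : ℤ) - 1 + 2) = (N : ℤ) + 1 by ring,
      show ((N : ℤ) - 1 + 1) = (N : ℤ) by ring] at this
    exact this
  have s1 : det3 (V (-1)) (V 1) (V 2) = -(b (-1) * d) := by
    rw [hrecm1, hd]
    simp only [det3_eq, Pi.add_apply, Pi.smul_apply, smul_eq_mul]
    ring
  have s2 : det3 (V (-1)) (V 1) (V 0) = -d := by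
    rw [hd]; simp only [det3_eq]; ring
  have s3 : det3 (V 0) (V 2) (V 3) = -(b 0) := by
    rw [hrec0]
    simp only [det3_eq, Pi.add_apply, Pi.smul_apply, smul_eq_mul] at h0 ⊢
    linear_combination (-(b 0)) * h0
  have s4 : det3 (V 0) (V 2) (V 1) = -1 := by
    simp only [det3_eq] at h0 ⊢
    linear_combination -h0
  -- T 0 and T 1
  have hT0 : T 0 = d • V 2 + (-(b (-1) * d)) • V 0 := by
    have h := hT 0
    norm_num at h
    rw [h, cross4, s1, s2]
    funext i
    simp only [Pi.add_apply, Pi.sub_apply, Pi.smul_apply, smul_eq_mul]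
    ring
  have hT1 : T 1 = a 0 • V 2 + (1 : ℝ) • V 0 := by
    have h := hT 1
    norm_num at h
    rw [h, cross4, s3, s4, hrec0, hc0]
    funext i
    simp only [Pi.add_apply, Pi.sub_apply, Pi.smul_apply, smul_eq_mul]
    ring
  have E1 : V ((N : ℤ) + 1) = d • M.mulVec (V 2) + (-(b (-1) * d)) • M.mulVec (V 0) := by
    have h := hfwd 1 le_rfl
    norm_num at h
    rw [h, hT0, mulVec_comb]
  have E2 : V ((N : ℤ) + 2) = a 0 • M.mulVec (V 2) + (1 : ℝ) • M.mulVec (V 0) := by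
    have h := hfwd 2 (by norm_num)
    norm_num at h
    rw [h, hT1, mulVec_comb]
  set X := det3 (M.mulVec (V 2)) (V (N : ℤ)) (V ((N : ℤ) - 1)) with hX
  set Y := det3 (M.mulVec (V 0)) (V (N : ℤ)) (V ((N : ℤ) - 1)) with hYdef
  have hY : Y = 0 := hseed2
  have hXeq : det3 (V ((N : ℤ) + 1)) (V (N : ℤ)) (V ((N : ℤ) - 1))
      = d * X + (-(b (-1) * d)) * Y := by rw [E1, det3_lin2]
  have hX2 : det3 (V ((N : ℤ) + 2)) (V (N : ℤ)) (V ((N : ℤ) - 1)) = a 0 * X + 1 * Y := by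
    rw [E2, det3_lin2]
  have z1 : det3 (V (N : ℤ)) (V (N : ℤ)) (V ((N : ℤ) - 1)) = 0 := by
    simp only [det3_eq]; ring
  have z2 : det3 (V ((N : ℤ) - 1)) (V (N : ℤ)) (V ((N : ℤ) - 1)) = 0 := by
    simp only [det3_eq]; ring
  have hX3 : det3 (V ((N : ℤ) + 2)) (V (N : ℤ)) (V ((N : ℤ) - 1))
      = a ((N : ℤ) - 1) * det3 (V ((N : ℤ) + 1)) (V (N : ℤ)) (V ((N : ℤ) - 1))
        + b ((N : ℤ) - 1) * 0 + c ((N : ℤ) - 1) * 0 := by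
    rw [hrecN, det3_lin3, z1, z2]
  have hρN1 : det3 (V ((N : ℤ) - 1)) (V (N : ℤ)) (V ((N : ℤ) + 1)) = 1 := by
    have := hnorm' ((N : ℤ) - 1) (by linarith) (by linarith)
    simp only [show ((N : ℤ) - 1 + 1) = (N : ℤ) by ring,
      show ((N : ℤ) - 1 + 2) = (N : ℤ) + 1 by ring] at this
    exact this
  have hanti : det3 (V ((N : ℤ) + 1)) (V (N : ℤ)) (V ((N : ℤ) - 1)) = -1 := by
    simp only [det3_eq] at hρN1 ⊢
    linear_combination -hρN1
  have key1 : d * X = -1 := by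
    rw [hanti, hY] at hXeq
    linarith
  have key2 : a 0 * X = -(a ((N : ℤ) - 1)) := by
    rw [hY] at hX2
    rw [hanti] at hX3
    have := hX2.symm.trans hX3
    linarith
  have h5 : a ((N : ℤ) - 1) * d = a 0 := by
    linear_combination d * key2 + (-(a 0)) * key1
  have ha0 := ha 0
  field_simp
  linear_combination a ((N : ℤ) - 1) * hcd - c (-1) * h5
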